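/- Let S be a nonempty finite index set, let Ω ⊆ S, let β > 0, and let R, Λ, Z, T : S → ℝ. Consider the affine constraint set C = {X : S → ℝ | X_i = T_i for all i ∈ Ω}. The function f(X) = (1/2)‖X − R‖² + ⟨Λ, Z − X⟩ + (β/2)‖Z − X‖², defined with the Euclidean inner product and norm on ℝ^S, has a unique minimizer X* over C, given entrywise by X*_i = T_i if i ∈ Ω and X*_i = (R_i + Λ_i + β Z_i)/(1 + β) if i ∉ Ω. -/
import Mathlib

open scoped BigOperators

lemma quad_min (β r lam z x : ℝ) (hβ : 0 < β) :
    (1/2)*((r+lam+β*z)/(1+β) - r)^2 + lam*(z - (r+lam+β*z)/(1+β))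
      + (β/2)*(z - (r+lam+β*z)/(1+β))^2
      + ((1+β)/2)*(x - (r+lam+β*z)/(1+β))^2
    = (1/2)*(x - r)^2 + lam*(z - x) + (β/2)*(z - x)^2 := by
  have h : (1:ℝ)+β ≠ 0 := by linarith
  field_simp
  ring

/-- Closed-form solution of the constrained X-subproblem: over the affine constraint
set `C = {X | X_i = T_i for all i ∈ Ω}`, the function
`f(X) = (1/2)‖X − R‖² + ⟨Λ, Z − X⟩ + (β/2)‖Z − X‖²` has a unique minimizer `X*`,
given by `X*_i = T_i` on `Ω` and `X*_i = (R_i + Λ_i + β Z_i)/(1 + β)` off `Ω`. -/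
theorem x_subproblem_unique_minimizer
    {S : Type*} [Fintype S] [Nonempty S]
    (Ω : Set S) [DecidablePred (· ∈ Ω)]
    (β : ℝ) (hβ : 0 < β) (R Λ Z T : S → ℝ) :
    ((fun i => if i ∈ Ω then T i else (R i + Λ i + β * Z i) / (1 + β)) ∈
        {X : S → ℝ | ∀ i ∈ Ω, X i = T i}) ∧
    (∀ X ∈ {X : S → ℝ | ∀ i ∈ Ω, X i = T i},
        X ≠ (fun i => if i ∈ Ω then T i else (R i + Λ i + β * Z i) / (1 + β)) →
        (1 / 2) * ∑ i, ((if i ∈ Ω then T i else (R i + Λ i + β * Z i) / (1 + β)) - R i) ^ 2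
          + ∑ i, Λ i * (Z i - (if i ∈ Ω then T i else (R i + Λ i + β * Z i) / (1 + β)))
          + (β / 2) * ∑ i, (Z i - (if i ∈ Ω then T i else (R i + Λ i + β * Z i) / (1 + β))) ^ 2
        < (1 / 2) * ∑ i, (X i - R i) ^ 2 + ∑ i, Λ i * (Z i - X i)
          + (β / 2) * ∑ i, (Z i - X i) ^ 2) := by
  set m : S → ℝ := fun i => (R i + Λ i + β * Z i) / (1 + β) with hm
  set Xs : S → ℝ := fun i => if i ∈ Ω then T i else m i with hXs
  refine ⟨fun i hi => by simp [hXs, hi], ?_⟩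
  intro X hX hne
  set F : ℝ → S → ℝ := fun x i => (1/2)*(x - R i)^2 + Λ i*(Z i - x) + (β/2)*(Z i - x)^2
    with hF
  have hsum : ∀ Y : S → ℝ,
      (1/2) * ∑ i, (Y i - R i)^2 + ∑ i, Λ i * (Z i - Y i)
        + (β/2) * ∑ i, (Z i - Y i)^2 = ∑ i, F (Y i) i := by
    intro Y
    rw [Finset.mul_sum, Finset.mul_sum, ← Finset.sum_add_distrib, ← Finset.sum_add_distrib]
  rw [hsum, hsum]
  obtain ⟨j, hj⟩ : ∃ j, X j ≠ Xs j := Function.ne_iff.mp hne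
  have hjΩ : j ∉ Ω := fun h => hj (by simp [hXs, h, hX j h])
  have hle : ∀ i, F (Xs i) i ≤ F (X i) i := by
    intro i
    by_cases hi : i ∈ Ω
    · simp [hXs, hi, hX i hi]
    · have := quad_min β (R i) (Λ i) (Z i) (X i) hβ
      have hpos : 0 ≤ ((1+β)/2)*(X i - (R i + Λ i + β * Z i)/(1+β))^2 :=
        mul_nonneg (by linarith) (sq_nonneg _)
      simp only [hF, hXs, hm, if_neg hi]
      nlinarith
  refine Finset.sum_lt_sum (fun i _ => hle i) ⟨j, Finset.mem_univ j, ?_⟩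
  have := quad_min β (R j) (Λ j) (Z j) (X j) hβ
  have hjne : X j ≠ (R j + Λ j + β * Z j)/(1+β) := by
    simpa [hXs, hm, if_neg hjΩ] using hj
  have hpos : 0 < ((1+β)/2)*(X j - (R j + Λ j + β * Z j)/(1+β))^2 :=
    mul_pos (by linarith) (by have h := sub_ne_zero.mpr hjne; positivity)
  simp only [hF, hXs, hm, if_neg hjΩ]
  nlinarith
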